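/- Deduction theorem for the omitting-types proof system: for any sentence φ and sentence σ, (φ → σ) ∈ [T]^p_∞ if and only if σ ∈ [T+φ]^p_∞. -/

import Mathlib

open FirstOrder

namespace Paper

universe u v w



variable {L : FirstOrder.Language.{u, v}} {m : ℕ}

open FirstOrder.Language

/-- The universal closure `∀ x̄ φ(x̄)` of a formula, as a sentence. -/
noncomputable def allClosure (φ : L.Formula (Fin m)) : L.Sentence :=
  Formula.iAlls (Fin m) (φ.relabel (Sum.inr : Fin m → Empty ⊕ Fin m))

/-- The existential closure `∃ x̄ φ(x̄)` of a formula, as a sentence. -/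
noncomputable def exClosure (φ : L.Formula (Fin m)) : L.Sentence :=
  Formula.iExs (Fin m) (φ.relabel (Sum.inr : Fin m → Empty ⊕ Fin m))

/-- The (semantic) first-order deductive closure of a theory. -/
def thClosure (T : L.Theory) : L.Theory := {σ | T ⊨ᵇ σ}

/-- `p(x̄)` is isolated in `T`: some formula `φ(x̄)` is consistent with `T` and
`T ⊨ ∀x̄ (φ(x̄) → ψ(x̄))` for every `ψ ∈ p`. -/
def IsolatedIn (T : L.Theory) (p : Set (L.Formula (Fin m))) : Prop :=
  ∃ φ : L.Formula (Fin m),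
    Theory.IsSatisfiable (T ∪ {exClosure φ}) ∧
      ∀ ψ ∈ p, T ⊨ᵇ allClosure (φ.imp ψ)

/-- `p(x̄)` is strongly isolated in `T`: in addition `T ⊨ ∃x̄ φ(x̄)`. -/
def StronglyIsolatedIn (T : L.Theory) (p : Set (L.Formula (Fin m))) : Prop :=
  ∃ φ : L.Formula (Fin m),
    (T ⊨ᵇ exClosure φ) ∧ ∀ ψ ∈ p, T ⊨ᵇ allClosure (φ.imp ψ)

/-- The set `(T)^p` of conclusions of the `p`-rule over `T`. -/
noncomputable def pRuleSet (p : Set (L.Formula (Fin m))) (T : L.Theory) : L.Theory :=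
  {σ | ∃ φ : L.Formula (Fin m),
    σ = Formula.not (exClosure φ) ∧ ∀ ψ ∈ p, T ⊨ᵇ allClosure (φ.imp ψ)}

/-- The theory `[T]^p = Th(T + (T)^p)`. -/
noncomputable def pClosure (p : Set (L.Formula (Fin m))) (T : L.Theory) : L.Theory :=
  thClosure (T ∪ pRuleSet p T)

/-- The transfinite iteration `[T]^p_α`. -/
noncomputable def pStage (T : L.Theory) (p : Set (L.Formula (Fin m))) (α : Ordinal.{0}) :
    L.Theory :=
  Ordinal.limitRecOn α (thClosure T) (fun _ S => pClosure p S)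
    (fun o _ ih => ⋃ (β : Ordinal.{0}) (h : β < o), ih β h)

/-- The theory `[T]^p_∞`, the union of all stages `[T]^p_α`. -/
noncomputable def pInfty (T : L.Theory) (p : Set (L.Formula (Fin m))) : L.Theory :=
  ⋃ α : Ordinal.{0}, pStage T p α

/-- The model `M` omits the type `p(x̄)`. -/
def Omits (M : Type w) [L.Structure M] (p : Set (L.Formula (Fin m))) : Prop :=
  ∀ x : Fin m → M, ∃ ψ ∈ p, ¬ ψ.Realize x

/-! ### Auxiliary lemmas -/

lemma models_iff' {T : L.Theory} {σ : L.Sentence} : (T ⊨ᵇ σ) ↔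
    ∀ (M : Type (max u v)) [L.Structure M], Nonempty M → (∀ τ ∈ T, M ⊨ τ) → M ⊨ σ := by
  rw [Theory.models_sentence_iff]
  constructor
  · intro h M _ hne hT
    have : Nonempty M := hne
    have : T.Model M := (Theory.model_iff T).2 hT
    exact h ⟨M⟩
  · intro h N
    exact h N N.nonempty' (fun τ hτ => Theory.realize_sentence_of_mem T hτ)

lemma mem_thClosure_iff {T : L.Theory} {σ : L.Sentence} : σ ∈ thClosure T ↔
    ∀ (M : Type (max u v)) [L.Structure M], Nonempty M → (∀ τ ∈ T, M ⊨ τ) → M ⊨ σ :=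
  models_iff'

lemma realize_allClosure {M : Type*} [L.Structure M] {ψ : L.Formula (Fin m)} :
    M ⊨ allClosure ψ ↔ ∀ x : Fin m → M, ψ.Realize x := by
  simp [allClosure, Sentence.Realize]

lemma realize_exClosure {M : Type*} [L.Structure M] {ψ : L.Formula (Fin m)} :
    M ⊨ exClosure ψ ↔ ∃ x : Fin m → M, ψ.Realize x := by
  simp [exClosure, Sentence.Realize]

lemma realize_relabel_empty {M : Type*} [L.Structure M] {φ : L.Sentence} {x : Fin m → M} :
    (φ.relabel (Empty.elim : Empty → Fin m)).Realize x ↔ M ⊨ φ := by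
  rw [Formula.realize_relabel]
  exact iff_of_eq (congrArg _ (Subsingleton.elim _ _))

lemma realize_imp_sentence {M : Type*} [L.Structure M] {φ σ : L.Sentence} :
    M ⊨ (φ ⟹ σ) ↔ (M ⊨ φ → M ⊨ σ) := by
  simp [Sentence.Realize]

lemma realize_not_sentence {M : Type*} [L.Structure M] {φ : L.Sentence} :
    M ⊨ Formula.not φ ↔ ¬ M ⊨ φ := by
  simp [Sentence.Realize]

lemma pStage_zero (T : L.Theory) (p : Set (L.Formula (Fin m))) :
    pStage T p 0 = thClosure T :=
  Ordinal.limitRecOn_zero _ _ _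

lemma pStage_succ (T : L.Theory) (p : Set (L.Formula (Fin m))) (α : Ordinal.{0}) :
    pStage T p (α + 1) = pClosure p (pStage T p α) :=
  Ordinal.limitRecOn_add_one _ _ _ _

lemma pStage_limit (T : L.Theory) (p : Set (L.Formula (Fin m))) {o : Ordinal.{0}}
    (ho : Order.IsSuccLimit o) :
    pStage T p o = ⋃ (β : Ordinal.{0}) (_ : β < o), pStage T p β :=
  Ordinal.limitRecOn_limit _ _ _ _ ho

lemma goodA_thClosure (S : L.Theory) (φ τ : L.Sentence) (h : τ ∈ thClosure S) :
    (φ ⟹ τ) ∈ thClosure S := by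
  rw [mem_thClosure_iff] at h ⊢
  intro M _ hne hS
  exact realize_imp_sentence.2 (fun _ => h M hne hS)

lemma goodB_thClosure (S : L.Theory) (φ : L.Sentence) : (φ ⟹ φ) ∈ thClosure S := by
  rw [mem_thClosure_iff]
  intro M _ _ _
  exact realize_imp_sentence.2 id

lemma goodA_pStage (T : L.Theory) (p : Set (L.Formula (Fin m))) (α : Ordinal.{0})
    (φ τ : L.Sentence) (h : τ ∈ pStage T p α) : (φ ⟹ τ) ∈ pStage T p α := by
  induction α using Ordinal.limitRecOn with
  | zero =>
    rw [pStage_zero] at h ⊢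
    exact goodA_thClosure _ _ _ h
  | add_one β _ =>
    rw [pStage_succ] at h ⊢
    exact goodA_thClosure _ _ _ h
  | limit o ho ih =>
    rw [pStage_limit T p ho] at h ⊢
    obtain ⟨s, ⟨β, rfl⟩, hs⟩ := h
    obtain ⟨s', ⟨hβ, rfl⟩, hτ⟩ := hs
    exact Set.mem_iUnion.2 ⟨β, Set.mem_iUnion.2 ⟨hβ, ih β hβ hτ⟩⟩

lemma goodB_pStage (T : L.Theory) (p : Set (L.Formula (Fin m))) (α : Ordinal.{0})
    (φ : L.Sentence) : (φ ⟹ φ) ∈ pStage T p α := by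
  induction α using Ordinal.limitRecOn with
  | zero => rw [pStage_zero]; exact goodB_thClosure _ _
  | add_one β _ => rw [pStage_succ]; exact goodB_thClosure _ _
  | limit o ho ih =>
    rw [pStage_limit T p ho]
    exact Set.mem_iUnion.2 ⟨0, Set.mem_iUnion.2 ⟨ho.pos, ih 0 ho.pos⟩⟩

lemma mem_pClosure_iff {p : Set (L.Formula (Fin m))} {S : L.Theory} {σ : L.Sentence} :
    σ ∈ pClosure p S ↔
      ∀ (M : Type (max u v)) [L.Structure M], Nonempty M →
        (∀ τ ∈ S, M ⊨ τ) → (∀ τ ∈ pRuleSet p S, M ⊨ τ) → M ⊨ σ := by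
  rw [pClosure, mem_thClosure_iff]
  constructor
  · intro h M _ hne h1 h2
    refine h M hne (fun τ hτ => ?_)
    rcases hτ with hτ | hτ
    · exact h1 τ hτ
    · exact h2 τ hτ
  · intro h M _ hne hT
    exact h M hne (fun τ hτ => hT τ (Set.mem_union_left _ hτ))
      (fun τ hτ => hT τ (Set.mem_union_right _ hτ))

lemma pStage_deduction (T : L.Theory) (p : Set (L.Formula (Fin m))) (φ : L.Sentence)
    (α : Ordinal.{0}) :
    ∀ σ : L.Sentence, σ ∈ pStage (T ∪ {φ}) p α ↔ (φ ⟹ σ) ∈ pStage T p α := by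
  induction α using Ordinal.limitRecOn with
  | zero =>
    intro σ
    rw [pStage_zero, pStage_zero, mem_thClosure_iff, mem_thClosure_iff]
    constructor
    · intro h M _ hne hT
      refine realize_imp_sentence.2 (fun hφM => ?_)
      refine h M hne (fun τ hτ => ?_)
      rcases hτ with hτ | hτ
      · exact hT τ hτ
      · rw [Set.mem_singleton_iff] at hτ; subst hτ; exact hφM
    · intro h M _ hne hT
      have hφM : M ⊨ φ := hT φ (Set.mem_union_right _ rfl)
      exact realize_imp_sentence.1
        (h M hne (fun τ hτ => hT τ (Set.mem_union_left _ hτ))) hφM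
  | add_one α ih =>
    -- `key`: models of stage α of `T ∪ {φ}` are exactly models of stage α of `T` plus `φ`.
    have key : ∀ (M : Type (max u v)) [L.Structure M], Nonempty M →
        ((∀ τ ∈ pStage (T ∪ {φ}) p α, M ⊨ τ) ↔
          ((∀ τ ∈ pStage T p α, M ⊨ τ) ∧ M ⊨ φ)) := by
      intro M _ hne
      constructor
      · intro h
        refine ⟨fun τ hτ => h τ ((ih τ).2 (goodA_pStage T p α φ τ hτ)), ?_⟩
        exact h φ ((ih φ).2 (goodB_pStage T p α φ))
      · rintro ⟨h, hφM⟩ τ hτ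
        exact realize_imp_sentence.1 (h _ ((ih τ).1 hτ)) hφM
    -- rule transfer: a `p`-rule premise over stage α of `T ∪ {φ}` yields one over stage α of `T`
    have rule_transfer : ∀ ψ : L.Formula (Fin m),
        (∀ χ ∈ p, pStage (T ∪ {φ}) p α ⊨ᵇ allClosure (ψ.imp χ)) →
        ∀ χ ∈ p, pStage T p α ⊨ᵇ
          allClosure (((φ.relabel (Empty.elim : Empty → Fin m)) ⊓ ψ).imp χ) := by
      intro ψ hψ χ hχ
      rw [models_iff']
      intro N _ hne hN
      refine realize_allClosure.2 (fun x => ?_)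
      rw [Formula.realize_imp]
      intro hx
      rw [Formula.realize_inf] at hx
      have hφN : N ⊨ φ := realize_relabel_empty.1 hx.1
      have hN' : ∀ τ ∈ pStage (T ∪ {φ}) p α, N ⊨ τ := (key N hne).2 ⟨hN, hφN⟩
      have := models_iff'.1 (hψ χ hχ) N hne hN'
      exact Formula.realize_imp.1 (realize_allClosure.1 this x) hx.2
    intro σ
    rw [pStage_succ, pStage_succ, mem_pClosure_iff, mem_pClosure_iff]
    constructor
    · intro h M _ hne hS hR
      refine realize_imp_sentence.2 (fun hφM => ?_)
      have hS' : ∀ τ ∈ pStage (T ∪ {φ}) p α, M ⊨ τ := (key M hne).2 ⟨hS, hφM⟩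
      have hR' : ∀ τ ∈ pRuleSet p (pStage (T ∪ {φ}) p α), M ⊨ τ := by
        rintro τ ⟨ψ, rfl, hψ⟩
        have hmem : Formula.not (exClosure ((φ.relabel (Empty.elim : Empty → Fin m)) ⊓ ψ))
            ∈ pRuleSet p (pStage T p α) := ⟨_, rfl, rule_transfer ψ hψ⟩
        have hM := realize_not_sentence.1 (hR _ hmem)
        refine realize_not_sentence.2 (fun hc => ?_)
        obtain ⟨x, hx⟩ := realize_exClosure.1 hc
        exact hM (realize_exClosure.2
          ⟨x, Formula.realize_inf.2 ⟨realize_relabel_empty.2 hφM, hx⟩⟩)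
      exact h M hne hS' hR'
    · intro h M _ hne hS' hR'
      obtain ⟨hS, hφM⟩ := (key M hne).1 hS'
      have hR : ∀ τ ∈ pRuleSet p (pStage T p α), M ⊨ τ := by
        rintro τ ⟨ψ, rfl, hψ⟩
        refine hR' _ ⟨ψ, rfl, fun χ hχ => ?_⟩
        rw [models_iff']
        intro N _ hne' hN'
        exact models_iff'.1 (hψ χ hχ) N hne' ((key N hne').1 hN').1
      exact realize_imp_sentence.1 (h M hne hS hR) hφM
  | limit o ho ih =>
    intro σ
    rw [pStage_limit _ p ho, pStage_limit _ p ho]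
    simp only [Set.mem_iUnion]
    exact exists_congr (fun β => exists_congr (fun hβ => ih β hβ σ))

/-- Deduction theorem for the omitting-types proof system:
`(φ → σ) ∈ [T]^p_∞` iff `σ ∈ [T + φ]^p_∞`. -/
theorem pInfty_deduction (T : L.Theory) (p : Set (L.Formula (Fin m)))
    (φ σ : L.Sentence) :
    (φ ⟹ σ) ∈ pInfty T p ↔ σ ∈ pInfty (T ∪ {φ}) p := by
  simp only [pInfty, Set.mem_iUnion]
  exact exists_congr (fun α => (pStage_deduction T p φ α σ).symm)

end Paper
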